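/- arXiv:2101.06656 — 7 statements merged into one kernel-verified Lean document; each statement's English description precedes it below -/
import Mathlib

section
/- Let L > 0, let g^u, g^v ∈ C²([0,L];ℝ), let â ∈ C¹([0,L];ℝ) with â(L) = 0, let f̂ : ℝ → ℝ be continuous, and let ǔ, v̌ : [0,L] → ℝ be continuous. Assume that for every x ∈ [0,L] one has (â·(g^u)')'(x) + f̂(g^u(x)) = ǔ(x) and (â·(g^v)')'(x) + f̂(g^v(x)) = v̌(x). Then for every x ∈ [0,L]: (g^v)'(x)·∫_x^L f̂(g^u(ξ)) dξ − (g^u)'(x)·∫_x^L f̂(g^v(ξ)) dξ = (g^v)'(x)·∫_x^L ǔ(ξ) dξ − (g^u)'(x)·∫_x^L v̌(ξ) dξ. -/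
/-!
Integrating each equation over `[x, L]` and using `ahat L = 0` gives
`∫ fhat ∘ gu = ∫ ucheck + ahat x * gu' x`, and likewise for `gv`; in the cross combination
`gv' x * (…) - gu' x * (…)` the two `ahat x * gu' x * gv' x` terms cancel.
-/

open Set intervalIntegral

theorem integral_eq_integral_add_sub_of_deriv_add_eq {h F U : ℝ → ℝ} {a b : ℝ}
    (hh : ContDiff ℝ 1 h) (hF : IntervalIntegrable F MeasureTheory.volume a b)
    (heq : ∀ ξ ∈ uIcc a b, deriv h ξ + F ξ = U ξ) :
    ∫ ξ in a..b, F ξ = (∫ ξ in a..b, U ξ) + h a - h b := by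
  have hdh : IntervalIntegrable (deriv h) MeasureTheory.volume a b :=
    (hh.continuous_deriv le_rfl).intervalIntegrable a b
  have hU : ∫ ξ in a..b, U ξ = ∫ ξ in a..b, (deriv h ξ + F ξ) :=
    integral_congr fun ξ hξ => (heq ξ hξ).symm
  have hFTC : ∫ ξ in a..b, deriv h ξ = h b - h a :=
    integral_deriv_eq_sub (fun ξ _ => (hh.differentiable one_ne_zero) ξ) hdh
  rw [hU, integral_add hdh hF, hFTC]
  ring

theorem integral_comp_eq_integral_add_flux {L x : ℝ} {g a f r : ℝ → ℝ}
    (hg : ContDiff ℝ 2 g) (ha : ContDiff ℝ 1 a) (haL : a L = 0) (hf : Continuous f)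
    (heq : ∀ ξ ∈ uIcc x L, deriv (fun y => a y * deriv g y) ξ + f (g ξ) = r ξ) :
    ∫ ξ in x..L, f (g ξ) = (∫ ξ in x..L, r ξ) + a x * deriv g x := by
  have hflux : ContDiff ℝ 1 (fun y => a y * deriv g y) := ha.mul hg.deriv'
  rw [integral_eq_integral_add_sub_of_deriv_add_eq (F := fun ξ => f (g ξ)) hflux
    ((hf.comp hg.continuous).intervalIntegrable x L) heq, haL, zero_mul, sub_zero]

theorem elimination_of_ahat_general
    (L : ℝ)
    (gu gv : ℝ → ℝ) (hgu : ContDiff ℝ 2 gu) (hgv : ContDiff ℝ 2 gv)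
    (ahat : ℝ → ℝ) (hahat : ContDiff ℝ 1 ahat) (hahatL : ahat L = 0)
    (fhat : ℝ → ℝ) (hfhat : Continuous fhat)
    (ucheck vcheck : ℝ → ℝ)
    (hequ : ∀ x ∈ Icc (0:ℝ) L,
      deriv (fun y => ahat y * deriv gu y) x + fhat (gu x) = ucheck x)
    (heqv : ∀ x ∈ Icc (0:ℝ) L,
      deriv (fun y => ahat y * deriv gv y) x + fhat (gv x) = vcheck x) :
    ∀ x ∈ Icc (0:ℝ) L,
      deriv gv x * (∫ ξ in x..L, fhat (gu ξ)) - deriv gu x * (∫ ξ in x..L, fhat (gv ξ)) =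
      deriv gv x * (∫ ξ in x..L, ucheck ξ) - deriv gu x * (∫ ξ in x..L, vcheck ξ) := by
  intro x hx
  have hsub : uIcc x L ⊆ Icc 0 L := by
    rw [uIcc_of_le hx.2]
    exact Icc_subset_Icc_left hx.1
  rw [integral_comp_eq_integral_add_flux hgu hahat hahatL hfhat fun ξ hξ => hequ ξ (hsub hξ),
    integral_comp_eq_integral_add_flux hgv hahat hahatL hfhat fun ξ hξ => heqv ξ (hsub hξ)]
  ring

/-- Elimination of the diffusion-coefficient difference `ahat` from the projected
system in the inverse problem with two final-time observations. -/
theorem elimination_of_ahat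
    (L : ℝ) (hL : 0 < L)
    (gu gv : ℝ → ℝ) (hgu : ContDiff ℝ 2 gu) (hgv : ContDiff ℝ 2 gv)
    (ahat : ℝ → ℝ) (hahat : ContDiff ℝ 1 ahat) (hahatL : ahat L = 0)
    (fhat : ℝ → ℝ) (hfhat : Continuous fhat)
    (ucheck vcheck : ℝ → ℝ) (hucheck : Continuous ucheck) (hvcheck : Continuous vcheck)
    (hequ : ∀ x ∈ Icc (0:ℝ) L,
      deriv (fun y => ahat y * deriv gu y) x + fhat (gu x) = ucheck x)
    (heqv : ∀ x ∈ Icc (0:ℝ) L,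
      deriv (fun y => ahat y * deriv gv y) x + fhat (gv x) = vcheck x) :
    ∀ x ∈ Icc (0:ℝ) L,
      deriv gv x * (∫ ξ in x..L, fhat (gu ξ)) - deriv gu x * (∫ ξ in x..L, fhat (gv ξ)) =
      deriv gv x * (∫ ξ in x..L, ucheck ξ) - deriv gu x * (∫ ξ in x..L, vcheck ξ) :=
  elimination_of_ahat_general L gu gv hgu hgv ahat hahat hahatL fhat hfhat ucheck vcheck hequ heqv
end

section
/- Let L > 0, μ > 0, let g^u, g^v ∈ C²([0,L];ℝ) with (g^u)'(x) ≥ μ for all x ∈ [0,L], let â ∈ C¹([0,L];ℝ) with â(L) = 0, let f̂ : ℝ → ℝ be continuous, and let ǔ, v̌ : [0,L] → ℝ be continuous. Assume (â·(g^u)')'(x) + f̂(g^u(x)) = ǔ(x) and (â·(g^v)')'(x) + f̂(g^v(x)) = v̌(x) for all x ∈ [0,L]. Set G(x) = (g^v)'(x)/(g^u)'(x). Then for all x ∈ [0,L]: f̂(g^v(x)) − G(x)·f̂(g^u(x)) + G'(x)·∫_x^L f̂(g^u(ξ)) dξ = v̌(x) − G(x)·ǔ(x) + G'(x)·∫_x^L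 ǔ(ξ) dξ. -/
open Set intervalIntegral

/-!
Put `A = â (g^u)'`, so that `A' = ǔ - f̂ ∘ g^u`, and `G = (g^v)' / (g^u)'`, so that
`â (g^v)' = A G` and hence `v̌ - f̂ ∘ g^v = A' G + A G'`. Since `â(L) = 0`, integrating the first
equation over `[x, L]` gives `A(x) = -∫_x^L (ǔ - f̂ ∘ g^u)`, which eliminates `â` from the second.
-/

theorem deriv_mul_eq_deriv_mul_mul_div_add {𝕜 : Type*} [NontriviallyNormedField 𝕜]
    {a p q : 𝕜 → 𝕜} {x : 𝕜} (ha : DifferentiableAt 𝕜 a x) (hp : DifferentiableAt 𝕜 p x)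
    (hq : DifferentiableAt 𝕜 q x) (hpx : p x ≠ 0) :
    deriv (fun y => a y * q y) x =
      deriv (fun y => a y * p y) x * (q x / p x) + a x * p x * deriv (fun y => q y / p y) x := by
  rw [deriv_fun_mul ha hq, deriv_fun_mul ha hp, deriv_fun_div hq hp hpx]
  field_simp
  ring

theorem integral_sub_integral_eq_sub_of_deriv_add_eq {A u w : ℝ → ℝ} {a b : ℝ}
    (hA : ContDiff ℝ 1 A) (hu : IntervalIntegrable u MeasureTheory.volume a b)
    (hw : IntervalIntegrable w MeasureTheory.volume a b)
    (h : ∀ ξ ∈ uIcc a b, deriv A ξ + w ξ = u ξ) :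
    (∫ ξ in a..b, u ξ) - ∫ ξ in a..b, w ξ = A b - A a := by
  have hderiv : EqOn (fun ξ => u ξ - w ξ) (deriv A) (uIcc a b) := fun ξ hξ => by
    simp only [← h ξ hξ, add_sub_cancel_right]
  rw [← integral_sub hu hw, integral_congr hderiv,
    integral_deriv_eq_sub (fun y _ => hA.differentiable one_ne_zero y)
      ((hA.continuous_deriv le_rfl).intervalIntegrable _ _)]

theorem volterra_identity_for_fhat_general
    (L μ : ℝ) (hμ : 0 < μ)
    (gu gv : ℝ → ℝ) (hgu : ContDiff ℝ 2 gu) (hgv : ContDiff ℝ 2 gv)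
    (hgu' : ∀ x ∈ Icc (0:ℝ) L, μ ≤ deriv gu x)
    (ahat : ℝ → ℝ) (hahat : ContDiff ℝ 1 ahat) (hahatL : ahat L = 0)
    (fhat : ℝ → ℝ) (hfhat : Continuous fhat)
    (ucheck vcheck : ℝ → ℝ) (hucheck : Continuous ucheck)
    (hequ : ∀ x ∈ Icc (0:ℝ) L,
      deriv (fun y => ahat y * deriv gu y) x + fhat (gu x) = ucheck x)
    (heqv : ∀ x ∈ Icc (0:ℝ) L,
      deriv (fun y => ahat y * deriv gv y) x + fhat (gv x) = vcheck x) :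
    ∀ x ∈ Icc (0:ℝ) L,
      fhat (gv x) - (deriv gv x / deriv gu x) * fhat (gu x) +
        deriv (fun y => deriv gv y / deriv gu y) x * (∫ ξ in x..L, fhat (gu ξ)) =
      vcheck x - (deriv gv x / deriv gu x) * ucheck x +
        deriv (fun y => deriv gv y / deriv gu y) x * (∫ ξ in x..L, ucheck ξ) := by
  intro x hx
  have hgu1 : ContDiff ℝ 1 (deriv gu) := hgu.deriv'
  have hgv1 : ContDiff ℝ 1 (deriv gv) := hgv.deriv'
  have hprod := deriv_mul_eq_deriv_mul_mul_div_add (hahat.differentiable one_ne_zero x)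
    (hgu1.differentiable one_ne_zero x) (hgv1.differentiable one_ne_zero x)
    (hμ.trans_le (hgu' x hx)).ne'
  have hint := integral_sub_integral_eq_sub_of_deriv_add_eq (hahat.mul hgu1)
    (hucheck.intervalIntegrable x L) ((hfhat.comp' hgu.continuous).intervalIntegrable x L)
    (fun ξ hξ => hequ ξ (uIcc_subset_Icc ⟨hx.1, hx.2⟩ ⟨hx.1.trans hx.2, le_rfl⟩ hξ))
  rw [hahatL, zero_mul, zero_sub] at hint
  rw [← hequ x hx, ← heqv x hx, hprod]
  linear_combination -deriv (fun y => deriv gv y / deriv gu y) x * hint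

/-- The first-kind Volterra-type identity for the nonlinearity difference `fhat`,
obtained by eliminating `ahat`, dividing by `(g^u)'` and differentiating. -/
theorem volterra_identity_for_fhat
    (L μ : ℝ) (hL : 0 < L) (hμ : 0 < μ)
    (gu gv : ℝ → ℝ) (hgu : ContDiff ℝ 2 gu) (hgv : ContDiff ℝ 2 gv)
    (hgu' : ∀ x ∈ Icc (0:ℝ) L, μ ≤ deriv gu x)
    (ahat : ℝ → ℝ) (hahat : ContDiff ℝ 1 ahat) (hahatL : ahat L = 0)
    (fhat : ℝ → ℝ) (hfhat : Continuous fhat)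
    (ucheck vcheck : ℝ → ℝ) (hucheck : Continuous ucheck) (hvcheck : Continuous vcheck)
    (hequ : ∀ x ∈ Icc (0:ℝ) L,
      deriv (fun y => ahat y * deriv gu y) x + fhat (gu x) = ucheck x)
    (heqv : ∀ x ∈ Icc (0:ℝ) L,
      deriv (fun y => ahat y * deriv gv y) x + fhat (gv x) = vcheck x) :
    ∀ x ∈ Icc (0:ℝ) L,
      fhat (gv x) - (deriv gv x / deriv gu x) * fhat (gu x) +
        deriv (fun y => deriv gv y / deriv gu y) x * (∫ ξ in x..L, fhat (gu ξ)) =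
      vcheck x - (deriv gv x / deriv gu x) * ucheck x +
        deriv (fun y => deriv gv y / deriv gu y) x * (∫ ξ in x..L, ucheck ξ) :=
  volterra_identity_for_fhat_general L μ hμ gu gv hgu hgv hgu' ahat hahat hahatL fhat hfhat ucheck
    vcheck hucheck hequ heqv
end

section
/- Let L > 0, μ > 0, let g^u, g^v ∈ C³([0,L];ℝ) with (g^u)'(x) ≥ μ for all x ∈ [0,L], let â ∈ C¹([0,L];ℝ) with â(L) = 0, let f̂ : ℝ → ℝ be continuously differentiable, and let ǔ, v̌ ∈ C¹([0,L];ℝ). Assume (â·(g^u)')'(x) + f̂(g^u(x)) = ǔ(x) and (â·(g^v)')'(x) + f̂(g^v(x)) = v̌(x) for all x ∈ [0,L]. Set G(x) = (g^v)'(x)/(g^u)'(x). Then for all x ∈ [0,L]: (f̂'(g^v(x)) − f̂'(g^u(x)))·(g^v)'(x) − 2 G'(x)·f̂(g^u(x)) + G''(x)·∫_x^L f̂(g^u(ξ)) dξ = v̌'(x) − G(x)·ǔ'(x) − 2 G'(x)·ǔ(x) + G''(x)·∫_x^L ǔ(ξ) dξ. -/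
open Set intervalIntegral Filter Topology

/-!
Integrating `(â (g^u)')' = ǔ - f̂(g^u)` from `x` to `L` with `â(L) = 0` gives
`∫_x^L (f̂(g^u) - ǔ) = â (g^u)'`. Since `(g^v)' = G (g^u)'`, the product rule turns the `v`-equation
into the vanishing on `[0, L]` of the residual
`f̂(g^v) - v̌ - G (f̂(g^u) - ǔ) + G' ∫_x^L (f̂(g^u) - ǔ)`.
A function vanishing on a nondegenerate interval has zero derivative there (one-sided at the
endpoints), and the derivative of this residual is the difference of the two sides of the identity.
-/

/-- The residual above, for `s = f̂ ∘ g^v - v̌` and `r = f̂ ∘ g^u - ǔ`. -/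
noncomputable def volterraResidual (s r G : ℝ → ℝ) (b y : ℝ) : ℝ :=
  s y - G y * r y + deriv G y * ∫ ξ in y..b, r ξ

theorem contDiffAt_deriv_div_deriv {n : WithTop ℕ∞} {f g : ℝ → ℝ}
    (hf : ContDiff ℝ (n + 1) f) (hg : ContDiff ℝ (n + 1) g) {x : ℝ} (hx : deriv g x ≠ 0) :
    ContDiffAt ℝ n (fun y => deriv f y / deriv g y) x :=
  hf.deriv'.contDiffAt.div hg.deriv'.contDiffAt hx

theorem mul_eventuallyEq_div_mul_mul {a u v : ℝ → ℝ} {x : ℝ} (hu : ContinuousAt u x)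
    (hx : u x ≠ 0) :
    (fun t => a t * v t) =ᶠ[𝓝 x] (fun t => v t / u t) * fun t => a t * u t := by
  filter_upwards [hu.eventually_ne hx] with t ht
  simp only [Pi.mul_apply]
  field_simp

theorem integral_eq_sub_of_deriv_eq_neg {p r : ℝ → ℝ} {a b : ℝ} (hp : ContDiff ℝ 1 p)
    (hr : ∀ y ∈ uIcc a b, deriv p y = -r y) :
    ∫ ξ in a..b, r ξ = p a - p b := by
  have hr' : ∀ y ∈ uIcc a b, r y = -deriv p y := fun y hy => by rw [hr y hy, neg_neg]
  rw [integral_congr hr', integral_neg,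
    integral_deriv_eq_sub (fun y _ => hp.differentiable one_ne_zero y)
      (hp.continuous_deriv_one.intervalIntegrable a b), neg_sub]

theorem volterraResidual_eq_zero {p q G r s : ℝ → ℝ} {b x : ℝ} (hp : ContDiff ℝ 1 p)
    (hpb : p b = 0) (hr : ∀ y ∈ uIcc x b, deriv p y = -r y) (hs : deriv q x = -s x)
    (hqG : q =ᶠ[𝓝 x] G * p) (hG : DifferentiableAt ℝ G x) :
    volterraResidual s r G b x = 0 := by
  have hint : ∫ ξ in x..b, r ξ = p x := by
    rw [integral_eq_sub_of_deriv_eq_neg hp hr, hpb, sub_zero]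
  have hq : deriv q x = deriv G x * p x + G x * deriv p x := by
    rw [hqG.deriv_eq]
    exact (hG.hasDerivAt.mul (hp.differentiable one_ne_zero x).hasDerivAt).deriv
  rw [volterraResidual, hint]
  linear_combination hs - hq - G x * hr x left_mem_uIcc

theorem hasDerivAt_volterraResidual {s r G : ℝ → ℝ} {s' r' b x : ℝ} (hs : HasDerivAt s s' x)
    (hr : HasDerivAt r r' x) (hrc : Continuous r) (hG : DifferentiableAt ℝ G x)
    (hG' : DifferentiableAt ℝ (deriv G) x) :
    HasDerivAt (volterraResidual s r G b)
      (s' - G x * r' - 2 * deriv G x * r x + deriv (deriv G) x * ∫ ξ in x..b, r ξ) x := by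
  have hint : HasDerivAt (fun y => ∫ ξ in y..b, r ξ) (-r x) x :=
    integral_hasDerivAt_left (hrc.intervalIntegrable x b) (hrc.stronglyMeasurableAtFilter _ _)
      hrc.continuousAt
  exact ((hs.sub (hG.hasDerivAt.mul hr)).add (hG'.hasDerivAt.mul hint)).congr_deriv (by ring)

theorem hasDerivAt_comp_sub {f g w : ℝ → ℝ} {x : ℝ} (hf : DifferentiableAt ℝ f (g x))
    (hg : DifferentiableAt ℝ g x) (hw : DifferentiableAt ℝ w x) :
    HasDerivAt (fun y => f (g y) - w y) (deriv f (g x) * deriv g x - deriv w x) x :=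
  (hf.hasDerivAt.comp x hg.hasDerivAt).sub hw.hasDerivAt

theorem HasDerivAt.eq_zero_of_eqOn_Icc {Φ : ℝ → ℝ} {Φ' a b x : ℝ} (hΦ : HasDerivAt Φ Φ' x)
    (hab : a < b) (hx : x ∈ Icc a b) (h0 : EqOn Φ 0 (Icc a b)) : Φ' = 0 :=
  (uniqueDiffOn_Icc hab x hx).eq_deriv _ hΦ.hasDerivWithinAt
    ((hasDerivWithinAt_const x _ 0).congr h0 (h0 hx))

/-- The twice-differentiated Volterra-type identity for the nonlinearity difference
`fhat`, with `G = (g^v)'/(g^u)'`. -/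
theorem differentiated_volterra_identity_for_fhat
    (L μ : ℝ) (hL : 0 < L) (hμ : 0 < μ)
    (gu gv : ℝ → ℝ) (hgu : ContDiff ℝ 3 gu) (hgv : ContDiff ℝ 3 gv)
    (hgu' : ∀ x ∈ Icc (0:ℝ) L, μ ≤ deriv gu x)
    (ahat : ℝ → ℝ) (hahat : ContDiff ℝ 1 ahat) (hahatL : ahat L = 0)
    (fhat : ℝ → ℝ) (hfhat : ContDiff ℝ 1 fhat)
    (ucheck vcheck : ℝ → ℝ) (hucheck : ContDiff ℝ 1 ucheck) (hvcheck : ContDiff ℝ 1 vcheck)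
    (hequ : ∀ x ∈ Icc (0:ℝ) L,
      deriv (fun y => ahat y * deriv gu y) x + fhat (gu x) = ucheck x)
    (heqv : ∀ x ∈ Icc (0:ℝ) L,
      deriv (fun y => ahat y * deriv gv y) x + fhat (gv x) = vcheck x) :
    ∀ x ∈ Icc (0:ℝ) L,
      (deriv fhat (gv x) - deriv fhat (gu x)) * deriv gv x -
        2 * deriv (fun y => deriv gv y / deriv gu y) x * fhat (gu x) +
        deriv (deriv (fun y => deriv gv y / deriv gu y)) x * (∫ ξ in x..L, fhat (gu ξ)) =
      deriv vcheck x - (deriv gv x / deriv gu x) * deriv ucheck x -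
        2 * deriv (fun y => deriv gv y / deriv gu y) x * ucheck x +
        deriv (deriv (fun y => deriv gv y / deriv gu y)) x * (∫ ξ in x..L, ucheck ξ) := by
  intro x hx
  set G := fun y => deriv gv y / deriv gu y
  have hgu'_ne : ∀ y ∈ Icc 0 L, deriv gu y ≠ 0 := fun y hy => (hμ.trans_le (hgu' y hy)).ne'
  have hG : ∀ y ∈ Icc 0 L, ContDiffAt ℝ 2 G y := fun y hy =>
    contDiffAt_deriv_div_deriv hgv hgu (hgu'_ne y hy)
  have hresidual : EqOn (volterraResidual (fun y => fhat (gv y) - vcheck y)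
      (fun y => fhat (gu y) - ucheck y) G L) 0 (Icc 0 L) := fun y hy => by
    have huIcc : uIcc y L ⊆ Icc 0 L := by
      rw [uIcc_of_le hy.2]; exact Icc_subset_Icc_left hy.1
    refine volterraResidual_eq_zero (hahat.mul ((hgu.deriv' (n := 2)).of_le (by norm_num)))
      (by simp [hahatL]) (fun z hz => by linarith [hequ z (huIcc hz)]) (by linarith [heqv y hy])
      (mul_eventuallyEq_div_mul_mul (hgu.continuous_deriv (by norm_num)).continuousAt
        (hgu'_ne y hy)) ((hG y hy).differentiableAt (by norm_num))
  have hs := hasDerivAt_comp_sub (hfhat.differentiable one_ne_zero (gv x))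
    (hgv.differentiable (by norm_num) x) (hvcheck.differentiable one_ne_zero x)
  have hr := hasDerivAt_comp_sub (hfhat.differentiable one_ne_zero (gu x))
    (hgu.differentiable (by norm_num) x) (hucheck.differentiable one_ne_zero x)
  have hfgu : Continuous fun y => fhat (gu y) := hfhat.continuous.comp hgu.continuous
  have hderiv := hasDerivAt_volterraResidual (b := L) hs hr (hfgu.sub hucheck.continuous)
    ((hG x hx).differentiableAt (by norm_num))
    (((hG x hx).derivWithin (m := 1) (by norm_num)).differentiableAt (by norm_num))
  have h := hderiv.eq_zero_of_eqOn_Icc hL hx hresidual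
  rw [integral_sub (hfgu.intervalIntegrable x L)
    (hucheck.continuous.intervalIntegrable x L)] at h
  have hGx : G x * deriv gu x = deriv gv x := div_mul_cancel₀ _ (hgu'_ne x hx)
  linear_combination h + deriv fhat (gu x) * hGx
end

section
/- Let L > 0 and let g^u, g^v : [0,L] → ℝ be continuously differentiable with (g^u)'(x) ≥ μ > 0, (g^v)'(x) ≥ δ > 0 and (g^v)'(x)/(g^u)'(x) ≤ κ < 1 for all x ∈ [0,L], and assume g^v([0,L]) ⊆ J := [g^u(0), g^u(L)]. For a continuous function j : J → ℝ define (Bj)(x) = ( j(g^v(x))·(g^v)'(x) − j(g^u(x))·(g^u)'(x) )·(g^v)'(x) for x ∈ [0,L]. Then sup_{u ∈ J} |j(u)| ≤ (1/(μ δ (1−κ))) · sup_{x ∈ [0,L]} |(Bj)(x)|. -/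
open Set

/-- Supremum of the absolute value of `w` over a set `s`. -/
noncomputable def supAbs (w : ℝ → ℝ) (s : Set ℝ) : ℝ :=
  sSup ((fun x => |w x|) '' s)

/-- Bound `‖B⁻¹‖_{C(Ω)→C(J)} ≤ 1/(μδ(1-κ))` for the substitution operator
`(Bj)(x) = (j(gᵛ(x))·(gᵛ)'(x) − j(gᵘ(x))·(gᵘ)'(x))·(gᵛ)'(x)`. -/
theorem inverse_substitution_operator_bound
    (L μ δ κ : ℝ) (hL : 0 < L) (hμ : 0 < μ) (hδ : 0 < δ) (hκ : κ < 1)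
    (gu gv : ℝ → ℝ) (hgu : ContDiff ℝ 1 gu) (hgv : ContDiff ℝ 1 gv)
    (hgu' : ∀ x ∈ Icc (0:ℝ) L, μ ≤ deriv gu x)
    (hgv' : ∀ x ∈ Icc (0:ℝ) L, δ ≤ deriv gv x)
    (hratio : ∀ x ∈ Icc (0:ℝ) L, deriv gv x / deriv gu x ≤ κ)
    (hrange : MapsTo gv (Icc (0:ℝ) L) (Icc (gu 0) (gu L)))
    (j : ℝ → ℝ) (hj : ContinuousOn j (Icc (gu 0) (gu L))) :
    supAbs j (Icc (gu 0) (gu L)) ≤ (1 / (μ * δ * (1 - κ))) *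
      supAbs (fun x => (j (gv x) * deriv gv x - j (gu x) * deriv gu x) * deriv gv x)
        (Icc (0:ℝ) L) := by
  set B : ℝ → ℝ := fun x => (j (gv x) * deriv gv x - j (gu x) * deriv gu x) * deriv gv x
    with hBdef
  have hguc : Continuous gu := hgu.continuous
  have hgvc : Continuous gv := hgv.continuous
  have hgu'c : Continuous (deriv gu) := hgu.continuous_deriv le_rfl
  have hgv'c : Continuous (deriv gv) := hgv.continuous_deriv le_rfl
  -- gu is monotone on [0,L]
  have hmono : StrictMonoOn gu (Icc 0 L) :=
    strictMonoOn_of_deriv_pos (convex_Icc 0 L) hguc.continuousOn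
      (fun x hx => lt_of_lt_of_le hμ (hgu' x (interior_subset hx)))
  have h0L : gu 0 ≤ gu L :=
    (hmono (left_mem_Icc.mpr hL.le) (right_mem_Icc.mpr hL.le) hL).le
  have hmapsgu : MapsTo gu (Icc (0:ℝ) L) (Icc (gu 0) (gu L)) := by
    intro x hx
    exact ⟨hmono.monotoneOn (left_mem_Icc.mpr hL.le) hx hx.1,
      hmono.monotoneOn hx (right_mem_Icc.mpr hL.le) hx.2⟩
  -- max of |j| on J
  have hJne : (Icc (gu 0) (gu L)).Nonempty := nonempty_Icc.mpr h0L
  obtain ⟨u, huJ, hu⟩ := isCompact_Icc.exists_isMaxOn hJne hj.abs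
  have humax : ∀ y ∈ Icc (gu 0) (gu L), |j y| ≤ |j u| := fun y hy => hu hy
  -- u = gu x₀ for some x₀
  obtain ⟨x₀, hx₀, hux⟩ : ∃ x₀ ∈ Icc (0:ℝ) L, gu x₀ = u := by
    have := intermediate_value_Icc hL.le hguc.continuousOn
    obtain ⟨x₀, hx₀, h⟩ := this huJ
    exact ⟨x₀, hx₀, h⟩
  subst hux
  -- B is continuous on [0,L]
  have hBcont : ContinuousOn B (Icc (0:ℝ) L) := by
    apply ContinuousOn.mul _ hgv'c.continuousOn
    exact (((hj.comp hgvc.continuousOn hrange).mul hgv'c.continuousOn).sub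
      ((hj.comp hguc.continuousOn hmapsgu).mul hgu'c.continuousOn))
  have hbdd : BddAbove ((fun x => |B x|) '' Icc (0:ℝ) L) :=
    (isCompact_Icc.image_of_continuousOn hBcont.abs).bddAbove
  have hBle : |B x₀| ≤ supAbs B (Icc (0:ℝ) L) :=
    le_csSup hbdd ⟨x₀, hx₀, rfl⟩
  -- key pointwise estimate
  set a := deriv gu x₀
  set b := deriv gv x₀
  have ha : μ ≤ a := hgu' x₀ hx₀
  have hb : δ ≤ b := hgv' x₀ hx₀
  have ha0 : (0:ℝ) < a := lt_of_lt_of_le hμ ha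
  have hb0 : (0:ℝ) < b := lt_of_lt_of_le hδ hb
  have hba : b ≤ κ * a := by
    have := hratio x₀ hx₀
    rwa [div_le_iff₀ ha0] at this
  set M := |j (gu x₀)| with hM
  have hM0 : 0 ≤ M := abs_nonneg _
  have hm : |j (gv x₀)| ≤ M := humax _ (hrange hx₀)
  have hm0 : 0 ≤ |j (gv x₀)| := abs_nonneg _
  have hBeq : |B x₀| = |j (gv x₀) * b - j (gu x₀) * a| * b := by
    rw [hBdef]
    simp only []
    rw [abs_mul, abs_of_pos hb0]
  have h2 : M * a - |j (gv x₀)| * b ≤ |j (gv x₀) * b - j (gu x₀) * a| := by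
    have h3 : |j (gu x₀) * a| - |j (gv x₀) * b| ≤ |j (gu x₀) * a - j (gv x₀) * b| :=
      abs_sub_abs_le_abs_sub _ _
    rw [abs_sub_comm] at h3
    rw [abs_mul, abs_mul, abs_of_pos ha0, abs_of_pos hb0] at h3
    rw [hM]
    linarith
  have key : μ * δ * (1 - κ) * M ≤ |B x₀| := by
    rw [hBeq]
    have habs0 : 0 ≤ |j (gv x₀) * b - j (gu x₀) * a| := abs_nonneg _
    have e0 : μ * δ * (1 - κ) ≤ (a - b) * b := by
      have h4 : (1 - κ) * μ ≤ a - b := by nlinarith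
      have h5 : 0 ≤ (1 - κ) * μ := by nlinarith
      calc μ * δ * (1 - κ) = ((1 - κ) * μ) * δ := by ring
        _ ≤ (a - b) * b := mul_le_mul h4 hb hδ.le (by linarith)
    have e1 : μ * δ * (1 - κ) * M ≤ (a - b) * b * M :=
      mul_le_mul_of_nonneg_right e0 hM0
    have e2 : (a - b) * b * M ≤ (M * a - |j (gv x₀)| * b) * b := by nlinarith [mul_nonneg (mul_nonneg (sub_nonneg.mpr hm) hb0.le) hb0.le]
    have e3 : (M * a - |j (gv x₀)| * b) * b ≤ |j (gv x₀) * b - j (gu x₀) * a| * b :=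
      mul_le_mul_of_nonneg_right h2 hb0.le
    linarith
  -- conclude
  have hc : (0:ℝ) < μ * δ * (1 - κ) := mul_pos (mul_pos hμ hδ) (by linarith)
  have hsup1 : supAbs j (Icc (gu 0) (gu L)) ≤ M := by
    apply csSup_le (hJne.image _)
    rintro y ⟨z, hz, rfl⟩
    exact humax z hz
  have hfin : M ≤ (1 / (μ * δ * (1 - κ))) * supAbs B (Icc (0:ℝ) L) := by
    rw [one_div, inv_mul_eq_div, le_div_iff₀ hc]
    calc M * (μ * δ * (1 - κ)) = μ * δ * (1 - κ) * M := by ring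
      _ ≤ |B x₀| := key
      _ ≤ _ := hBle
  exact hsup1.trans hfin
end

section
/- Let c ≤ d be real numbers, let j : [c,d] → ℝ be continuous, let a : [c,d] → ℝ satisfy |a(ζ)| ≤ κ for all ζ with some κ < 1, let b : [c,d] → ℝ satisfy c ≤ b(ζ) ≤ ζ for all ζ ∈ [c,d], and let k : [c,d]×[c,d] → ℝ be such that for each ζ the function z ↦ k(ζ,z) is measurable on [c,ζ] and |k(ζ,z)| ≤ K for some constant K. If for every ζ ∈ [c,d] one has j(ζ) − a(ζ)·j(b(ζ)) + ∫_c^ζ k(ζ,z)·j(z) dz = 0, then j(ζ) = 0 for all ζ ∈ [c,d]. -/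
/-!
Bielecki's weighted norm: measure `j` against the weight `exp (ρ (ζ - c))`. If
`|j z| ≤ N exp (ρ (z - c))` on `[c, ζ]`, the delayed term is bounded by `κ N exp (ρ (ζ - c))`
because `b ζ ≤ ζ` and the weight increases, and the Volterra integral by
`(K / ρ) N exp (ρ (ζ - c))`. Taking `ρ` so large that `κ + K / ρ < 1`, the best constant `N`,
which is attained by compactness, satisfies `N ≤ (κ + K / ρ) N`, hence vanishes.
-/

open Set intervalIntegral Real

theorem IsCompact.eqOn_zero_of_weighted_bound_contracts {α : Type*} [TopologicalSpace α]
    {s : Set α} (hs : IsCompact s) {f w : α → ℝ} (hf : ContinuousOn f s)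
    (hw : ContinuousOn w s) (hw0 : ∀ x ∈ s, 0 < w x) {q : ℝ} (hq : q < 1)
    (h : ∀ N, (∀ x ∈ s, |f x| ≤ N * w x) → ∀ x ∈ s, |f x| ≤ q * N * w x) :
    EqOn f 0 s := by
  intro x hx
  obtain ⟨x₀, hx₀, hmax⟩ :=
    hs.exists_isMaxOn ⟨x, hx⟩ (hf.abs.div hw fun y hy => (hw0 y hy).ne')
  set N := |f x₀| / w x₀
  have hbound : ∀ y ∈ s, |f y| ≤ N * w y := fun y hy => (div_le_iff₀ (hw0 y hy)).1 (hmax hy)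
  have hN : N ≤ q * N := (div_le_iff₀ (hw0 x₀ hx₀)).2 (h N hbound x₀ hx₀)
  have hN0 : N ≤ 0 := by nlinarith
  have hfx : |f x| ≤ 0 := (hbound x hx).trans (mul_nonpos_of_nonpos_of_nonneg hN0 (hw0 x hx).le)
  exact abs_nonpos_iff.1 hfx

theorem integral_exp_mul_sub {ρ : ℝ} (hρ : ρ ≠ 0) (c x : ℝ) :
    ∫ z in c..x, exp (ρ * (z - c)) = (exp (ρ * (x - c)) - 1) / ρ := by
  simp_rw [mul_sub]
  rw [integral_comp_mul_sub (fun z => exp z) hρ, integral_exp]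
  simp only [sub_self, exp_zero, smul_eq_mul]
  field_simp

theorem abs_integral_le_of_abs_le_mul_exp {f : ℝ → ℝ} {c x ρ M : ℝ} (hcx : c ≤ x) (hρ : 0 < ρ)
    (hf : ∀ z ∈ Icc c x, |f z| ≤ M * exp (ρ * (z - c))) :
    |∫ z in c..x, f z| ≤ M / ρ * exp (ρ * (x - c)) := by
  have hM : 0 ≤ M := by simpa using (abs_nonneg _).trans (hf c ⟨le_rfl, hcx⟩)
  have hcont : Continuous fun z => M * exp (ρ * (z - c)) := by fun_prop
  calc |∫ z in c..x, f z| ≤ ∫ z in c..x, M * exp (ρ * (z - c)) := by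
        simp only [← Real.norm_eq_abs] at hf ⊢
        exact norm_integral_le_of_norm_le hcx
          (Filter.Eventually.of_forall fun z hz => hf z (Ioc_subset_Icc_self hz))
          (hcont.intervalIntegrable _ _)
    _ = M / ρ * (exp (ρ * (x - c)) - 1) := by
        rw [integral_const_mul, integral_exp_mul_sub hρ.ne']; ring
    _ ≤ M / ρ * exp (ρ * (x - c)) := by gcongr; linarith

theorem abs_le_of_delayed_volterra_eq_zero {c ζ ρ κ K N : ℝ} {j : ℝ → ℝ} {a b : ℝ}
    {k : ℝ → ℝ} (hρ : 0 < ρ) (ha : |a| ≤ κ) (hb : b ∈ Icc c ζ)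
    (hk : ∀ z ∈ Icc c ζ, |k z| ≤ K)
    (heq : j ζ - a * j b + (∫ z in c..ζ, k z * j z) = 0)
    (hj : ∀ z ∈ Icc c ζ, |j z| ≤ N * exp (ρ * (z - c))) :
    |j ζ| ≤ (κ + K / ρ) * N * exp (ρ * (ζ - c)) := by
  have hcζ : c ≤ ζ := hb.1.trans hb.2
  have hκ : 0 ≤ κ := (abs_nonneg _).trans ha
  have hK : 0 ≤ K := (abs_nonneg _).trans (hk ζ ⟨hcζ, le_rfl⟩)
  have hdelay : |a * j b| ≤ κ * (N * exp (ρ * (ζ - c))) := by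
    rw [abs_mul]
    refine mul_le_mul ha ((hj b hb).trans ?_) (abs_nonneg _) hκ
    have hN : 0 ≤ N := by simpa using (abs_nonneg _).trans (hj c ⟨le_rfl, hcζ⟩)
    gcongr
    exact hb.2
  have hintegral : |∫ z in c..ζ, k z * j z| ≤ K * N / ρ * exp (ρ * (ζ - c)) := by
    refine abs_integral_le_of_abs_le_mul_exp hcζ hρ fun z hz => ?_
    rw [abs_mul, mul_assoc]
    exact mul_le_mul (hk z hz) (hj z hz) (abs_nonneg _) hK
  have hjζ : j ζ = a * j b - ∫ z in c..ζ, k z * j z := by linarith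
  calc |j ζ| = |a * j b - ∫ z in c..ζ, k z * j z| := by rw [hjζ]
    _ ≤ |a * j b| + |∫ z in c..ζ, k z * j z| := abs_sub _ _
    _ ≤ κ * (N * exp (ρ * (ζ - c))) + K * N / ρ * exp (ρ * (ζ - c)) :=
        add_le_add hdelay hintegral
    _ = (κ + K / ρ) * N * exp (ρ * (ζ - c)) := by ring

theorem homogeneous_delayed_volterra_trivial_general
    (c d : ℝ)
    (j : ℝ → ℝ) (hj : ContinuousOn j (Icc c d))
    (a : ℝ → ℝ) (κ : ℝ) (hκ : κ < 1) (ha : ∀ ζ ∈ Icc c d, |a ζ| ≤ κ)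
    (b : ℝ → ℝ) (hb : ∀ ζ ∈ Icc c d, b ζ ∈ Icc c ζ)
    (k : ℝ → ℝ → ℝ) (K : ℝ)
    (hkbd : ∀ ζ ∈ Icc c d, ∀ z ∈ Icc c ζ, |k ζ z| ≤ K)
    (heq : ∀ ζ ∈ Icc c d, j ζ - a ζ * j (b ζ) + (∫ z in c..ζ, k ζ z * j z) = 0) :
    ∀ ζ ∈ Icc c d, j ζ = 0 := by
  obtain ⟨r, hr, hKr⟩ := exists_pos_mul_lt (sub_pos.2 hκ) K
  have hq : κ + K / r⁻¹ < 1 := by rw [div_inv_eq_mul]; linarith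
  refine fun ζ hζ => isCompact_Icc.eqOn_zero_of_weighted_bound_contracts hj
    (w := fun z => exp (r⁻¹ * (z - c))) (by fun_prop) (fun _ _ => exp_pos _) hq ?_ hζ
  intro N hN ζ hζ
  exact abs_le_of_delayed_volterra_eq_zero (inv_pos.2 hr) (ha ζ hζ) (hb ζ hζ) (hkbd ζ hζ)
    (heq ζ hζ) fun z hz => hN z (Icc_subset_Icc_right hζ.2 hz)

/-- A homogeneous second-kind Volterra integral equation with an additional
delayed-argument term whose coefficient is bounded by `κ < 1` has only the
trivial continuous solution. -/
theorem homogeneous_delayed_volterra_trivial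
    (c d : ℝ) (hcd : c ≤ d)
    (j : ℝ → ℝ) (hj : ContinuousOn j (Icc c d))
    (a : ℝ → ℝ) (κ : ℝ) (hκ : κ < 1) (ha : ∀ ζ ∈ Icc c d, |a ζ| ≤ κ)
    (b : ℝ → ℝ) (hb : ∀ ζ ∈ Icc c d, b ζ ∈ Icc c ζ)
    (k : ℝ → ℝ → ℝ) (K : ℝ)
    (hkmeas : ∀ ζ ∈ Icc c d, Measurable fun z => k ζ z)
    (hkbd : ∀ ζ ∈ Icc c d, ∀ z ∈ Icc c ζ, |k ζ z| ≤ K)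
    (heq : ∀ ζ ∈ Icc c d, j ζ - a ζ * j (b ζ) + (∫ z in c..ζ, k ζ z * j z) = 0) :
    ∀ ζ ∈ Icc c d, j ζ = 0 :=
  homogeneous_delayed_volterra_trivial_general c d j hj a κ hκ ha b hb k K hkbd heq
end

section
/- Let L > 0, T > 0, μ > 0, δ > 0. Let g ∈ C³([0,L];ℝ) with g'(x) ≥ μ for all x ∈ [0,L], and let h ∈ C¹([0,T];ℝ) with h'(t) ≥ δ for all t ∈ [0,T]; set J = [h(0), h(T)], assume g([0,L]) ⊆ J, and fix p ∈ J. Then there exists a constant C > 0, depending only on g, h, μ, δ, L and T, with the following property: whenever â ∈ C²([0,L];ℝ) with â(L) = 0, f̂ ∈ C¹(J;ℝ) with f̂(p) = 0, ǔ ∈ C¹([0,L];ℝ) and ψ ∈ C¹([0,T];ℝ) satisfy (â·g')'(x) + f̂(g(x)) = ǔ(x) for all x ∈ [0,L] and f̂(h(t)) = ψ(t) for all t ∈ [0,T], one has ‖â‖_{C²([0,L])} + ‖f̂‖_{C¹(J)} ≤ C·( ‖ǔ‖_{C¹([0,L])} + ‖ψ‖_{C¹([0,T])} ). -/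
open Set

/-- The `C¹` norm of `w` on a set `s`. -/
noncomputable def normC1 (w : ℝ → ℝ) (s : Set ℝ) : ℝ :=
  supAbs w s + supAbs (deriv w) s

/-- The `C²` norm of `w` on a set `s`. -/
noncomputable def normC2 (w : ℝ → ℝ) (s : Set ℝ) : ℝ :=
  supAbs w s + supAbs (deriv w) s + supAbs (deriv (deriv w)) s

/-!
The time trace determines `f̂` on `J = h([0, T])`: `|f̂ ∘ h| = |ψ|`, and since `h' ≥ δ` the chain
rule gives `|f̂' ∘ h| ≤ |ψ'| / δ`. Hence `w = ǔ - f̂ ∘ g` is bounded in `C¹` by the data, and it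
remains to solve `(â g')' = w` with `â(L) = 0`. Integrating from `L` bounds `â g'`, hence `â`
since `g' ≥ μ`; the expanded identities `w = â' g' + â g''` and `w' = â'' g' + 2 â' g'' + â g'''`
then bound `â'` and `â''` in turn.
-/

lemma supAbs_nonneg (w : ℝ → ℝ) (s : Set ℝ) : 0 ≤ supAbs w s :=
  Real.sSup_nonneg (by rintro _ ⟨x, -, rfl⟩; exact abs_nonneg _)

lemma normC1_nonneg (w : ℝ → ℝ) (s : Set ℝ) : 0 ≤ normC1 w s :=
  add_nonneg (supAbs_nonneg _ _) (supAbs_nonneg _ _)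

lemma supAbs_le {w : ℝ → ℝ} {s : Set ℝ} {M : ℝ} (hM : 0 ≤ M)
    (H : ∀ x ∈ s, |w x| ≤ M) : supAbs w s ≤ M :=
  Real.sSup_le (by rintro _ ⟨x, hx, rfl⟩; exact H x hx) hM

lemma abs_le_supAbs {w : ℝ → ℝ} {a b x : ℝ} (hw : ContinuousOn w (Icc a b))
    (hx : x ∈ Icc a b) : |w x| ≤ supAbs w (Icc a b) :=
  le_csSup (isCompact_Icc.image_of_continuousOn hw.abs).bddAbove ⟨x, hx, rfl⟩

lemma abs_le_div_of_abs_mul_le {u v μ M : ℝ} (hμ : 0 < μ) (hv : μ ≤ v) (h : |u * v| ≤ M) :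
    |u| ≤ M / μ := by
  rw [le_div_iff₀ hμ]
  calc |u| * μ ≤ |u| * v := mul_le_mul_of_nonneg_left hv (abs_nonneg u)
    _ = |u * v| := by rw [abs_mul, abs_of_pos (hμ.trans_le hv)]
    _ ≤ M := h

lemma forall_Icc_le_of_forall_Ioo {φ : ℝ → ℝ} {a b M : ℝ} (hab : a < b)
    (hφ : ContinuousOn φ (Icc a b)) (H : ∀ x ∈ Ioo a b, φ x ≤ M) :
    ∀ x ∈ Icc a b, φ x ≤ M := by
  rw [← closure_Ioo hab.ne] at hφ ⊢
  exact le_on_closure H hφ continuousOn_const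

lemma abs_le_mul_of_abs_deriv_le {F : ℝ → ℝ} {a b M : ℝ} (hF : Differentiable ℝ F)
    (hFb : F b = 0) (hF' : ∀ x ∈ Icc a b, |deriv F x| ≤ M) :
    ∀ x ∈ Icc a b, |F x| ≤ M * (b - a) := by
  intro x hx
  have hb : b ∈ Icc a b := right_mem_Icc.2 (hx.1.trans hx.2)
  have hmvt := (convex_Icc a b).norm_image_sub_le_of_norm_deriv_le (fun y _ => hF y) hF' hb hx
  rw [hFb, sub_zero] at hmvt
  calc |F x| ≤ M * |x - b| := hmvt
    _ ≤ M * (b - a) := by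
      gcongr
      · exact (abs_nonneg _).trans (hF' x hx)
      · rw [abs_sub_comm, abs_of_nonneg (by linarith [hx.2])]; linarith [hx.1]

section Trace

variable {f h ψ : ℝ → ℝ} {a b δ : ℝ}

lemma abs_le_supAbs_of_eqOn_comp (hab : a ≤ b) (hh : ContinuousOn h (Icc a b))
    (hψ : ContinuousOn ψ (Icc a b)) (hfh : EqOn (f ∘ h) ψ (Icc a b)) :
    ∀ y ∈ Icc (h a) (h b), |f y| ≤ supAbs ψ (Icc a b) := by
  intro y hy
  obtain ⟨t, ht, rfl⟩ := intermediate_value_Icc hab hh hy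
  rw [show f (h t) = ψ t from hfh ht]
  exact abs_le_supAbs hψ ht

lemma abs_deriv_le_div_of_eqOn_comp (hab : a < b) (hδ : 0 < δ) (hh : ContDiff ℝ 1 h)
    (hh' : ∀ t ∈ Icc a b, δ ≤ deriv h t) (hf : ContDiff ℝ 1 f) (hψ : ContDiff ℝ 1 ψ)
    (hfh : EqOn (f ∘ h) ψ (Icc a b)) :
    ∀ y ∈ Icc (h a) (h b), |deriv f y| ≤ supAbs (deriv ψ) (Icc a b) / δ := by
  have hchain : ∀ t ∈ Ioo a b, deriv f (h t) * deriv h t = deriv ψ t := fun t ht => by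
    rw [← deriv_comp t (hf.differentiable one_ne_zero (h t)) (hh.differentiable one_ne_zero t),
      (hfh.mono Ioo_subset_Icc_self).deriv isOpen_Ioo ht]
  have hbound : ∀ t ∈ Icc a b, |deriv f (h t)| ≤ supAbs (deriv ψ) (Icc a b) / δ :=
    forall_Icc_le_of_forall_Ioo hab
      (hf.continuous_deriv_one.comp hh.continuous).abs.continuousOn fun t ht =>
      abs_le_div_of_abs_mul_le hδ (hh' t (Ioo_subset_Icc_self ht))
        (hchain t ht ▸ abs_le_supAbs (by fun_prop) (Ioo_subset_Icc_self ht))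
  intro y hy
  obtain ⟨t, ht, rfl⟩ := intermediate_value_Icc hab.le hh.continuous.continuousOn hy
  exact hbound t ht

lemma normC1_le_of_eqOn_comp (hab : a < b) (hδ : 0 < δ) (hh : ContDiff ℝ 1 h)
    (hh' : ∀ t ∈ Icc a b, δ ≤ deriv h t) (hf : ContDiff ℝ 1 f) (hψ : ContDiff ℝ 1 ψ)
    (hfh : EqOn (f ∘ h) ψ (Icc a b)) :
    normC1 f (Icc (h a) (h b)) ≤ (1 + δ⁻¹) * normC1 ψ (Icc a b) := by
  have h0 := supAbs_le (supAbs_nonneg _ _) <|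
    abs_le_supAbs_of_eqOn_comp hab.le hh.continuous.continuousOn hψ.continuous.continuousOn hfh
  have h1 := supAbs_le (div_nonneg (supAbs_nonneg _ _) hδ.le) <|
    abs_deriv_le_div_of_eqOn_comp hab hδ hh hh' hf hψ hfh
  have hψ₀ := supAbs_nonneg ψ (Icc a b)
  have hψ₁ := supAbs_nonneg (deriv ψ) (Icc a b)
  have hδ₀ : 0 ≤ δ⁻¹ := inv_nonneg.2 hδ.le
  rw [div_eq_mul_inv] at h1
  unfold normC1
  nlinarith

end Trace

lemma normC1_sub_comp_le {u f g : ℝ → ℝ} {a b c d : ℝ} (hu : ContDiff ℝ 1 u)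
    (hf : ContDiff ℝ 1 f) (hg : ContDiff ℝ 1 g) (hgJ : MapsTo g (Icc a b) (Icc c d)) :
    normC1 (fun x => u x - f (g x)) (Icc a b) ≤
      normC1 u (Icc a b) + (1 + supAbs (deriv g) (Icc a b)) * normC1 f (Icc c d) := by
  have hderiv (x : ℝ) :
      deriv (fun x => u x - f (g x)) x = deriv u x - deriv f (g x) * deriv g x :=
    ((hu.differentiable one_ne_zero x).hasDerivAt.sub
      ((hf.differentiable one_ne_zero (g x)).hasDerivAt.comp x
        (hg.differentiable one_ne_zero x).hasDerivAt)).deriv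
  have hu₀ := supAbs_nonneg u (Icc a b)
  have hu₁ := supAbs_nonneg (deriv u) (Icc a b)
  have hf₀ := supAbs_nonneg f (Icc c d)
  have hf₁ := supAbs_nonneg (deriv f) (Icc c d)
  have hg₁ := supAbs_nonneg (deriv g) (Icc a b)
  have h₀ : supAbs (fun x => u x - f (g x)) (Icc a b) ≤
      supAbs u (Icc a b) + supAbs f (Icc c d) :=
    supAbs_le (by positivity) fun x hx => (abs_sub _ _).trans <| add_le_add
      (abs_le_supAbs hu.continuous.continuousOn hx)
      (abs_le_supAbs hf.continuous.continuousOn (hgJ hx))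
  have h₁ : supAbs (deriv fun x => u x - f (g x)) (Icc a b) ≤
      supAbs (deriv u) (Icc a b) + supAbs (deriv f) (Icc c d) * supAbs (deriv g) (Icc a b) :=
    supAbs_le (by positivity) fun x hx => by
      rw [hderiv]
      calc |deriv u x - deriv f (g x) * deriv g x|
          ≤ |deriv u x| + |deriv f (g x)| * |deriv g x| := by rw [← abs_mul]; exact abs_sub _ _
        _ ≤ _ := by
          gcongr
          exacts [abs_le_supAbs hu.continuous_deriv_one.continuousOn hx,
            abs_le_supAbs hf.continuous_deriv_one.continuousOn (hgJ hx),
            abs_le_supAbs hg.continuous_deriv_one.continuousOn hx]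
  unfold normC1
  nlinarith

section Elliptic

variable {φ g w : ℝ → ℝ} {a b μ : ℝ}

lemma eqOn_deriv_mul_add_mul_deriv (hφ : Differentiable ℝ φ) (hg : Differentiable ℝ (deriv g))
    {s : Set ℝ} (heq : EqOn (deriv fun y => φ y * deriv g y) w s) :
    EqOn w (fun x => deriv φ x * deriv g x + φ x * deriv (deriv g) x) s := fun x hx => by
  rw [← heq hx, deriv_fun_mul (hφ x) (hg x)]

lemma abs_le_of_eqOn_deriv_mul (hμ : 0 < μ) (hg' : ∀ x ∈ Icc a b, μ ≤ deriv g x)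
    (hφ : Differentiable ℝ φ) (hg : Differentiable ℝ (deriv g)) (hφb : φ b = 0)
    (heq : EqOn (deriv fun y => φ y * deriv g y) w (Icc a b)) {M : ℝ}
    (hw : ∀ x ∈ Icc a b, |w x| ≤ M) : ∀ x ∈ Icc a b, |φ x| ≤ M * (b - a) / μ := fun x hx =>
  abs_le_div_of_abs_mul_le hμ (hg' x hx) <|
    abs_le_mul_of_abs_deriv_le (hφ.mul hg) (by simp [hφb]) (fun y hy => heq hy ▸ hw y hy) x hx

lemma abs_deriv_le_of_eqOn (hμ : 0 < μ) (hg' : ∀ x ∈ Icc a b, μ ≤ deriv g x)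
    (hweq : EqOn w (fun x => deriv φ x * deriv g x + φ x * deriv (deriv g) x) (Icc a b))
    {M M₀ K₂ : ℝ} (hw : ∀ x ∈ Icc a b, |w x| ≤ M) (hφ₀ : ∀ x ∈ Icc a b, |φ x| ≤ M₀)
    (hK₂ : ∀ x ∈ Icc a b, |deriv (deriv g) x| ≤ K₂) :
    ∀ x ∈ Icc a b, |deriv φ x| ≤ (M + M₀ * K₂) / μ := fun x hx => by
  refine abs_le_div_of_abs_mul_le hμ (hg' x hx) ?_
  calc |deriv φ x * deriv g x| = |w x - φ x * deriv (deriv g) x| := by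
        rw [hweq hx, add_sub_cancel_right]
    _ ≤ |w x| + |φ x| * |deriv (deriv g) x| := by rw [← abs_mul]; exact abs_sub _ _
    _ ≤ M + M₀ * K₂ := by
        gcongr
        exacts [hw x hx, (abs_nonneg _).trans (hφ₀ x hx), hφ₀ x hx, hK₂ x hx]

lemma deriv_deriv_mul_eq_of_eqOn (hφ : ContDiff ℝ 2 φ) (hg : ContDiff ℝ 3 g)
    (hweq : EqOn w (fun x => deriv φ x * deriv g x + φ x * deriv (deriv g) x) (Icc a b)) :
    ∀ x ∈ Ioo a b, deriv (deriv φ) x * deriv g x = deriv w x -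
      2 * (deriv φ x * deriv (deriv g) x) - φ x * deriv (deriv (deriv g)) x := fun x hx => by
  have hφ₁ : Differentiable ℝ (deriv φ) := hφ.differentiable_deriv_two
  have hg₁ : Differentiable ℝ (deriv g) := (hg.deriv' (n := 2)).differentiable (by norm_num)
  have hg₂ : Differentiable ℝ (deriv (deriv g)) := by fun_prop
  have hφ₀ : Differentiable ℝ φ := hφ.differentiable (by norm_num)
  rw [(hweq.mono Ioo_subset_Icc_self).deriv isOpen_Ioo hx,
    (((hφ₁ x).hasDerivAt.fun_mul (hg₁ x).hasDerivAt).fun_add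
      ((hφ₀ x).hasDerivAt.fun_mul (hg₂ x).hasDerivAt)).deriv]
  ring

lemma abs_deriv_deriv_le_of_eqOn (hab : a < b) (hμ : 0 < μ)
    (hg' : ∀ x ∈ Icc a b, μ ≤ deriv g x) (hφ : ContDiff ℝ 2 φ) (hg : ContDiff ℝ 3 g)
    (hweq : EqOn w (fun x => deriv φ x * deriv g x + φ x * deriv (deriv g) x) (Icc a b))
    {M M₀ M₁ K₂ K₃ : ℝ} (hw : ∀ x ∈ Icc a b, |deriv w x| ≤ M)
    (hφ₀ : ∀ x ∈ Icc a b, |φ x| ≤ M₀) (hφ₁ : ∀ x ∈ Icc a b, |deriv φ x| ≤ M₁)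
    (hK₂ : ∀ x ∈ Icc a b, |deriv (deriv g) x| ≤ K₂)
    (hK₃ : ∀ x ∈ Icc a b, |deriv (deriv (deriv g)) x| ≤ K₃) :
    ∀ x ∈ Icc a b, |deriv (deriv φ) x| ≤ (M + 2 * (M₁ * K₂) + M₀ * K₃) / μ := by
  refine forall_Icc_le_of_forall_Ioo hab (by fun_prop) fun x hx => ?_
  have hx' := Ioo_subset_Icc_self hx
  refine abs_le_div_of_abs_mul_le hμ (hg' x hx') ?_
  rw [deriv_deriv_mul_eq_of_eqOn hφ hg hweq x hx]
  calc _ ≤ |deriv w x| + |2 * (deriv φ x * deriv (deriv g) x)| +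
        |φ x * deriv (deriv (deriv g)) x| :=
          (abs_sub _ _).trans (add_le_add_left (abs_sub _ _) _)
    _ = |deriv w x| + 2 * (|deriv φ x| * |deriv (deriv g) x|) +
        |φ x| * |deriv (deriv (deriv g)) x| := by simp only [abs_mul, abs_two]
    _ ≤ M + 2 * (M₁ * K₂) + M₀ * K₃ := by
        gcongr
        exacts [hw x hx', (abs_nonneg _).trans (hφ₁ x hx'), hφ₁ x hx', hK₂ x hx',
          (abs_nonneg _).trans (hφ₀ x hx'), hφ₀ x hx', hK₃ x hx']

theorem exists_normC2_le_of_eqOn_deriv_mul (hab : a < b) (hμ : 0 < μ) (hg : ContDiff ℝ 3 g)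
    (hg' : ∀ x ∈ Icc a b, μ ≤ deriv g x) :
    ∃ C ≥ 0, ∀ φ w : ℝ → ℝ, ContDiff ℝ 2 φ → φ b = 0 → ContDiff ℝ 1 w →
      EqOn (deriv fun y => φ y * deriv g y) w (Icc a b) →
        normC2 φ (Icc a b) ≤ C * normC1 w (Icc a b) := by
  set K₂ := supAbs (deriv (deriv g)) (Icc a b)
  set K₃ := supAbs (deriv (deriv (deriv g))) (Icc a b)
  have hK₂ : 0 ≤ K₂ := supAbs_nonneg _ _
  have hK₃ : 0 ≤ K₃ := supAbs_nonneg _ _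
  -- `c₀, c₁, c₂` bound `φ, φ', φ''` in units of `‖w‖_{C¹}`, through the three lemmas above.
  set c₀ := (b - a) / μ
  set c₁ := (1 + c₀ * K₂) / μ
  set c₂ := (1 + 2 * (c₁ * K₂) + c₀ * K₃) / μ
  have hc₀ : 0 ≤ c₀ := div_nonneg (sub_nonneg.2 hab.le) hμ.le
  have hc₁ : 0 ≤ c₁ := by positivity
  have hc₂ : 0 ≤ c₂ := by positivity
  refine ⟨c₀ + c₁ + c₂, by positivity, fun φ w hφ hφb hw heq => ?_⟩
  set N := normC1 w (Icc a b)
  have hN := normC1_nonneg w (Icc a b)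
  have hw₀ : ∀ x ∈ Icc a b, |w x| ≤ N := fun x hx =>
    (abs_le_supAbs hw.continuous.continuousOn hx).trans
      (le_add_of_nonneg_right (supAbs_nonneg _ _))
  have hw₁ : ∀ x ∈ Icc a b, |deriv w x| ≤ N := fun x hx =>
    (abs_le_supAbs hw.continuous_deriv_one.continuousOn hx).trans
      (le_add_of_nonneg_left (supAbs_nonneg _ _))
  have hg₁ : Differentiable ℝ (deriv g) := (hg.deriv' (n := 2)).differentiable (by norm_num)
  have hφd : Differentiable ℝ φ := hφ.differentiable (by norm_num)
  have hg₂ : ∀ x ∈ Icc a b, |deriv (deriv g) x| ≤ K₂ := fun x hx =>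
    abs_le_supAbs (show Differentiable ℝ (deriv (deriv g)) by fun_prop).continuous.continuousOn hx
  have hg₃ : ∀ x ∈ Icc a b, |deriv (deriv (deriv g)) x| ≤ K₃ := fun x hx =>
    abs_le_supAbs (show Continuous (deriv (deriv (deriv g))) by fun_prop).continuousOn hx
  have hweq := eqOn_deriv_mul_add_mul_deriv hφd hg₁ heq
  have hφ₀ : ∀ x ∈ Icc a b, |φ x| ≤ c₀ * N := fun x hx =>
    (abs_le_of_eqOn_deriv_mul hμ hg' hφd hg₁ hφb heq hw₀ x hx).trans_eq (by ring)
  have hφ₁ : ∀ x ∈ Icc a b, |deriv φ x| ≤ c₁ * N := fun x hx =>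
    (abs_deriv_le_of_eqOn hμ hg' hweq hw₀ hφ₀ hg₂ x hx).trans_eq (by ring)
  have hφ₂ : ∀ x ∈ Icc a b, |deriv (deriv φ) x| ≤ c₂ * N := fun x hx =>
    (abs_deriv_deriv_le_of_eqOn hab hμ hg' hφ hg hweq hw₁ hφ₀ hφ₁ hg₂ hg₃ x hx).trans_eq (by ring)
  unfold normC2
  linarith [supAbs_le (by positivity) hφ₀, supAbs_le (by positivity) hφ₁,
    supAbs_le (by positivity) hφ₂]

end Elliptic

theorem M_bounded_invertibility_mixed_general
    (L T μ δ : ℝ) (hL : 0 < L) (hT : 0 < T) (hμ : 0 < μ) (hδ : 0 < δ)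
    (g : ℝ → ℝ) (hg : ContDiff ℝ 3 g) (hg' : ∀ x ∈ Icc (0:ℝ) L, μ ≤ deriv g x)
    (h : ℝ → ℝ) (hh : ContDiff ℝ 1 h) (hh' : ∀ t ∈ Icc (0:ℝ) T, δ ≤ deriv h t)
    (hrange : MapsTo g (Icc (0:ℝ) L) (Icc (h 0) (h T)))
    (p : ℝ) :
    ∃ C > 0, ∀ (ahat fhat ucheck ψ : ℝ → ℝ),
      ContDiff ℝ 2 ahat → ahat L = 0 →
      ContDiff ℝ 1 fhat → fhat p = 0 →
      ContDiff ℝ 1 ucheck → ContDiff ℝ 1 ψ →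
      (∀ x ∈ Icc (0:ℝ) L,
        deriv (fun y => ahat y * deriv g y) x + fhat (g x) = ucheck x) →
      (∀ t ∈ Icc (0:ℝ) T, fhat (h t) = ψ t) →
      normC2 ahat (Icc (0:ℝ) L) + normC1 fhat (Icc (h 0) (h T)) ≤
        C * (normC1 ucheck (Icc (0:ℝ) L) + normC1 ψ (Icc (0:ℝ) T)) := by
  obtain ⟨C₀, hC₀, hahat_le⟩ := exists_normC2_le_of_eqOn_deriv_mul hL hμ hg hg'
  set K := supAbs (deriv g) (Icc 0 L)
  have hK : 0 ≤ K := supAbs_nonneg _ _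
  refine ⟨C₀ + (C₀ * (1 + K) + 1) * (1 + δ⁻¹), by positivity, ?_⟩
  intro ahat fhat ucheck ψ hahat haL hfhat _ hucheck hψ heq hψeq
  have hfhat_le := normC1_le_of_eqOn_comp hT hδ hh hh' hfhat hψ fun t ht => hψeq t ht
  have hg₁ : ContDiff ℝ 1 g := hg.of_le (by norm_num)
  have hw_le := normC1_sub_comp_le hucheck hfhat hg₁ hrange
  have ha_le := hahat_le ahat (fun x => ucheck x - fhat (g x)) hahat haL
    (hucheck.sub (hfhat.comp hg₁)) fun x hx => eq_sub_of_add_eq (heq x hx)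
  have hu₀ := normC1_nonneg ucheck (Icc 0 L)
  have hψ₀ := normC1_nonneg ψ (Icc 0 T)
  calc _ ≤ C₀ * (normC1 ucheck (Icc 0 L) + (1 + K) * normC1 fhat (Icc (h 0) (h T))) +
        normC1 fhat (Icc (h 0) (h T)) := by gcongr; exact ha_le.trans (by gcongr)
    _ = C₀ * normC1 ucheck (Icc 0 L) +
        (C₀ * (1 + K) + 1) * normC1 fhat (Icc (h 0) (h T)) := by ring
    _ ≤ C₀ * normC1 ucheck (Icc 0 L) +
        (C₀ * (1 + K) + 1) * ((1 + δ⁻¹) * normC1 ψ (Icc 0 T)) := by gcongr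
    _ ≤ _ := by
        nlinarith [mul_nonneg hC₀ hψ₀,
          mul_nonneg (by positivity : 0 ≤ (C₀ * (1 + K) + 1) * (1 + δ⁻¹)) hu₀]

/-- Sup-norm bounded invertibility of `𝕄(â,f̂) = ((â·g')' + f̂∘g, f̂∘h)` in the
final-time / time-trace observation setting. -/
theorem M_bounded_invertibility_mixed
    (L T μ δ : ℝ) (hL : 0 < L) (hT : 0 < T) (hμ : 0 < μ) (hδ : 0 < δ)
    (g : ℝ → ℝ) (hg : ContDiff ℝ 3 g) (hg' : ∀ x ∈ Icc (0:ℝ) L, μ ≤ deriv g x)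
    (h : ℝ → ℝ) (hh : ContDiff ℝ 1 h) (hh' : ∀ t ∈ Icc (0:ℝ) T, δ ≤ deriv h t)
    (hrange : MapsTo g (Icc (0:ℝ) L) (Icc (h 0) (h T)))
    (p : ℝ) (hp : p ∈ Icc (h 0) (h T)) :
    ∃ C > 0, ∀ (ahat fhat ucheck ψ : ℝ → ℝ),
      ContDiff ℝ 2 ahat → ahat L = 0 →
      ContDiff ℝ 1 fhat → fhat p = 0 →
      ContDiff ℝ 1 ucheck → ContDiff ℝ 1 ψ →
      (∀ x ∈ Icc (0:ℝ) L,
        deriv (fun y => ahat y * deriv g y) x + fhat (g x) = ucheck x) →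
      (∀ t ∈ Icc (0:ℝ) T, fhat (h t) = ψ t) →
      normC2 ahat (Icc (0:ℝ) L) + normC1 fhat (Icc (h 0) (h T)) ≤
        C * (normC1 ucheck (Icc (0:ℝ) L) + normC1 ψ (Icc (0:ℝ) T)) :=
  M_bounded_invertibility_mixed_general L T μ δ hL hT hμ hδ g hg hg' h hh hh' hrange p
end

section
/- Let (λ_n)_{n∈ℕ} be a strictly increasing sequence of positive real numbers with λ_n → ∞, and let (c_n)_{n∈ℕ} be real numbers with Σ_n |c_n|/λ_n < ∞. If Σ_n c_n/(p + λ_n) = 0 for every p > 0, then c_n = 0 for every n. -/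
/-!
Instead of continuing `H(p) = Σ cₙ/(p + λₙ)` analytically to its poles, take divided differences
of `H` at pivots `q₀ > q₁ > ⋯` in `[1, 2]`: by `1/((p+λ)(q+λ)) = (1/(p+λ) - 1/(q+λ))/(q-p)`, the
vanishing of `H` on `p > 0` gives `Σ cₙ wₘ(λₙ)/(1 + λₙ) = 0` for every `m`, where
`wₘ(x) = ∏_{j<m} (q_j + x)⁻¹`. If `c_k = 0` for `k < N`, divide by `wₘ(λ_N)`: for `k > N` the ratio
`wₘ(λ_k)/wₘ(λ_N) ≤ ((2 + λ_N)/(2 + λ_k))ᵐ` tends to `0`, so by dominated convergence the sums tend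
to `c_N/(1 + λ_N)`, which is therefore `0`.
-/

open Filter Topology Finset

noncomputable def pivotWeight (q : ℕ → ℝ) (x : ℝ) (m : ℕ) : ℝ :=
  ∏ j ∈ range m, (q j + x)⁻¹

section PivotWeight

variable {q : ℕ → ℝ} {x y : ℝ}

@[simp]
lemma pivotWeight_zero : pivotWeight q x 0 = 1 :=
  prod_range_zero _

lemma pivotWeight_succ (m : ℕ) : pivotWeight q x (m + 1) = pivotWeight q x m * (q m + x)⁻¹ :=
  prod_range_succ _ _

lemma pivotWeight_pos (hqx : ∀ j, 0 < q j + x) (m : ℕ) : 0 < pivotWeight q x m :=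
  prod_pos fun j _ => inv_pos.2 (hqx j)

lemma abs_pivotWeight_le_one (hqx : ∀ j, 1 ≤ q j + x) (m : ℕ) : |pivotWeight q x m| ≤ 1 := by
  rw [abs_of_pos (pivotWeight_pos (fun j => one_pos.trans_le (hqx j)) m)]
  exact prod_le_one (fun j _ => inv_nonneg.2 (zero_le_one.trans (hqx j)))
    fun j _ => inv_le_one_of_one_le₀ (hqx j)

lemma pivotWeight_anti (hqx : ∀ j, 0 < q j + x) (hxy : x ≤ y) (m : ℕ) :
    pivotWeight q y m ≤ pivotWeight q x m :=
  prod_le_prod (fun j _ => inv_nonneg.2 (by linarith [hqx j]))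
    fun j _ => inv_anti₀ (hqx j) (by linarith)

lemma pivotWeight_le_pow_mul {Q : ℝ} (hqQ : ∀ j, q j ≤ Q) (hqx : ∀ j, 0 < q j + x) (hxy : x ≤ y)
    (m : ℕ) : pivotWeight q y m ≤ ((Q + x) / (Q + y)) ^ m * pivotWeight q x m := by
  rw [pivotWeight, pivotWeight, ← card_range m, ← prod_const, card_range, ← prod_mul_distrib]
  refine prod_le_prod (fun j _ => inv_nonneg.2 (by linarith [hqx j])) fun j _ => ?_
  have hjx := hqx j
  have hQy : 0 < Q + y := by linarith [hqQ j]
  rw [← div_eq_mul_inv, div_div, inv_eq_one_div, div_le_div_iff₀ (by linarith) (by positivity)]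
  nlinarith [mul_nonneg (sub_nonneg.2 (hqQ j)) (sub_nonneg.2 hxy)]

lemma tendsto_pivotWeight_div_atTop {Q : ℝ} (hqQ : ∀ j, q j ≤ Q) (hqx : ∀ j, 0 < q j + x)
    (hxy : x < y) : Tendsto (fun m => pivotWeight q y m / pivotWeight q x m) atTop (𝓝 0) := by
  have hQx : 0 < Q + x := by linarith [hqQ 0, hqx 0]
  have hr : (Q + x) / (Q + y) < 1 := (div_lt_one (by linarith)).2 (by linarith)
  refine squeeze_zero (fun m => (div_pos (pivotWeight_pos (fun j => by linarith [hqx j]) m)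
    (pivotWeight_pos hqx m)).le) (fun m => ?_)
    (tendsto_pow_atTop_nhds_zero_of_lt_one (div_pos hQx (by linarith)).le hr)
  rw [div_le_iff₀ (pivotWeight_pos hqx m)]
  exact pivotWeight_le_pow_mul hqQ hqx hxy.le m

end PivotWeight

lemma abs_mul_div_add_le {a w p l : ℝ} (hw : |w| ≤ 1) (hp : 0 ≤ p) (hl : 0 < l) :
    |a * w / (p + l)| ≤ |a| / l := by
  rw [abs_div, abs_mul, abs_of_pos (by linarith : 0 < p + l)]
  calc |a| * |w| / (p + l) ≤ |a| * 1 / (p + l) := by gcongr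
    _ ≤ |a| / l := by rw [mul_one]; gcongr; linarith

lemma eq_zero_of_tendsto_tsum_mul {ι β : Type*} [DecidableEq β] {l : Filter ι} [l.NeBot]
    {a b : β → ℝ} {ρ : ι → β → ℝ} {N : β} (hb : Summable b)
    (hbound : ∀ i k, ‖a k * ρ i k‖ ≤ b k)
    (hlim : ∀ k ≠ N, Tendsto (fun i => a k * ρ i k) l (𝓝 0)) (hρN : ∀ i, ρ i N = 1)
    (h : ∀ i, ∑' k, a k * ρ i k = 0) : a N = 0 := by
  have hlim' : ∀ k, Tendsto (fun i => a k * ρ i k) l (𝓝 ((Pi.single N (a N) : β → ℝ) k)) := by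
    intro k
    by_cases hk : k = N
    · subst hk
      simp [hρN]
    · simpa [hk] using hlim k hk
  have hDCT := tendsto_tsum_of_dominated_convergence hb hlim' (Eventually.of_forall hbound)
  simp only [h, tsum_pi_single] at hDCT
  exact tendsto_nhds_unique hDCT tendsto_const_nhds

section Residues

variable {lam c q : ℕ → ℝ}

lemma summable_mul_div_add (hpos : ∀ n, 0 < lam n) (hsum : Summable fun n => |c n| / lam n)
    {w : ℕ → ℝ} (hw : ∀ n, |w n| ≤ 1) {p : ℝ} (hp : 0 ≤ p) :
    Summable fun n => c n * w n / (p + lam n) :=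
  hsum.of_norm_bounded fun n => abs_mul_div_add_le (hw n) hp (hpos n)

lemma tsum_mul_pivotWeight_div_add_eq_zero (hpos : ∀ n, 0 < lam n)
    (hsum : Summable fun n => |c n| / lam n) (hq : StrictAnti q) (hq1 : ∀ j, 1 ≤ q j)
    (hzero : ∀ p > (0:ℝ), ∑' n, c n / (p + lam n) = 0) (m : ℕ) :
    ∀ p, 0 < p → p ≤ q m → ∑' n, c n * pivotWeight q (lam n) m / (p + lam n) = 0 := by
  induction m with
  | zero => intro p hp _; simpa using hzero p hp
  | succ m ih =>
    intro p hp hpq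
    have hpm : p < q m := hpq.trans_lt (hq m.lt_succ_self)
    have hqm : 0 < q m := by linarith [hq1 m]
    have hsummable : ∀ p' : ℝ, 0 ≤ p' →
        Summable fun n => c n * pivotWeight q (lam n) m / (p' + lam n) := fun p' hp' =>
      summable_mul_div_add hpos hsum
        (fun n => abs_pivotWeight_le_one (fun j => by linarith [hq1 j, hpos n]) m) hp'
    have hdiff : ∀ n, c n * pivotWeight q (lam n) (m + 1) / (p + lam n) = (q m - p)⁻¹ *
        (c n * pivotWeight q (lam n) m / (p + lam n) -
          c n * pivotWeight q (lam n) m / (q m + lam n)) := by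
      intro n
      have := hpos n
      rw [pivotWeight_succ]
      field_simp [(by linarith : q m - p ≠ 0)]
      ring
    rw [tsum_congr hdiff, tsum_mul_left, (hsummable p hp.le).tsum_sub (hsummable _ hqm.le),
      ih p hp hpm.le, ih (q m) hqm le_rfl, sub_zero, mul_zero]

lemma eq_zero_of_forall_tsum_mul_pivotWeight_eq_zero (hmono : StrictMono lam)
    (hpos : ∀ n, 0 < lam n) (hsum : Summable fun n => |c n| / lam n) (hq : Antitone q)
    (hq1 : ∀ j, 1 ≤ q j) {N : ℕ} (hlt : ∀ k < N, c k = 0)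
    (h : ∀ m, ∑' k, c k * pivotWeight q (lam k) m / (1 + lam k) = 0) : c N = 0 := by
  set ρ : ℕ → ℕ → ℝ := fun m k => pivotWeight q (lam k) m / pivotWeight q (lam N) m
  have hqN : ∀ j, 0 < q j + lam N := fun j => by linarith [hq1 j, hpos N]
  have hρ : ∀ m k, N ≤ k → |ρ m k| ≤ 1 := fun m k hk => by
    rw [abs_of_pos (div_pos (pivotWeight_pos (fun j => by linarith [hq1 j, hpos k]) m)
      (pivotWeight_pos hqN m)), div_le_one (pivotWeight_pos hqN m)]
    exact pivotWeight_anti hqN (hmono.monotone hk) m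
  have hcN : c N / (1 + lam N) = 0 := by
    refine eq_zero_of_tendsto_tsum_mul (l := atTop) (a := fun k => c k / (1 + lam k)) (ρ := ρ)
      hsum ?_ ?_ ?_ ?_
    · intro m k
      rcases lt_or_ge k N with hk | hk
      · simp [hlt k hk]
      · rw [Real.norm_eq_abs, div_mul_eq_mul_div]
        exact abs_mul_div_add_le (hρ m k hk) zero_le_one (hpos k)
    · intro k hk
      rcases hk.lt_or_gt with hk | hk
      · simp [hlt k hk]
      · simpa using (tendsto_pivotWeight_div_atTop (fun j => hq (Nat.zero_le j)) hqN
          (hmono hk)).const_mul (c k / (1 + lam k))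
    · intro m
      exact div_self (pivotWeight_pos hqN m).ne'
    · intro m
      have hfactor : ∀ k, c k / (1 + lam k) * ρ m k =
          (pivotWeight q (lam N) m)⁻¹ * (c k * pivotWeight q (lam k) m / (1 + lam k)) := by
        intro k
        simp only [ρ]
        ring
      rw [tsum_congr hfactor, tsum_mul_left, h m, mul_zero]
  exact (div_eq_zero_iff.1 hcN).resolve_right (by linarith [hpos N])

end Residues

theorem residues_vanish_of_H_vanishes_general
    (lam c : ℕ → ℝ) (hmono : StrictMono lam) (hpos : ∀ n, 0 < lam n)
    (hsum : Summable fun n => |c n| / lam n)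
    (hzero : ∀ p > (0:ℝ), ∑' n, c n / (p + lam n) = 0) :
    ∀ n, c n = 0 := by
  set q : ℕ → ℝ := fun j => 1 + 2⁻¹ ^ j
  have hq : StrictAnti q := fun i j hij =>
    add_lt_add_right (pow_lt_pow_right_of_lt_one₀ (a := (2:ℝ)⁻¹) (by norm_num) (by norm_num) hij) 1
  have hq1 : ∀ j, 1 ≤ q j := fun j => le_add_of_nonneg_right (by positivity)
  intro N
  induction N using Nat.strong_induction_on with
  | _ N ih =>
    exact eq_zero_of_forall_tsum_mul_pivotWeight_eq_zero hmono hpos hsum hq.antitone hq1 ih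
      fun m => tsum_mul_pivotWeight_div_add_eq_zero hpos hsum hq hq1 hzero m 1 one_pos (hq1 m)

/-- Vanishing of the meromorphic function `H(p) = Σ cₙ/(p + λₙ)` for all `p > 0`
forces all residues `cₙ` to vanish, the poles `−λₙ` being distinct. -/
theorem residues_vanish_of_H_vanishes
    (lam c : ℕ → ℝ) (hmono : StrictMono lam) (hpos : ∀ n, 0 < lam n)
    (htend : Tendsto lam atTop atTop)
    (hsum : Summable fun n => |c n| / lam n)
    (hzero : ∀ p > (0:ℝ), ∑' n, c n / (p + lam n) = 0) :
    ∀ n, c n = 0 :=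
  residues_vanish_of_H_vanishes_general lam c hmono hpos hsum hzero
end
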